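/- arXiv:2507.14957 — 3 statements merged into one kernel-verified Lean document; each statement's English description precedes it below -/
import Mathlib

section
/- Let v be an additive valuation on subsets of a finite set M such that v({g}) ∈ {0,1} for every g ∈ M. If an allocation (X_i, X_j) of two disjoint bundles satisfies the EFX condition for agent i (i.e., v(X_i) ≥ v(X_j \ {g}) for every g ∈ X_j), then v(X_i) ≥ μ(X_i ∪ X_j), where μ(S) is the maximum over all partitions (A,B) of S of min(v(A), v(B)). -/
open Finset

/-- Additive valuation induced by natural-number item values. -/
def addValN {α : Type*} (w : α → ℕ) (S : Finset α) : ℕ := ∑ g ∈ S, w g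

/-- Two-part maximin share: max over partitions (A, S \ A) of S of the min value. -/
def muN {α : Type*} [DecidableEq α] (v : Finset α → ℕ) (S : Finset α) : ℕ :=
  S.powerset.sup' ⟨∅, Finset.empty_mem_powerset S⟩ fun A => min (v A) (v (S \ A))

theorem stmt0 {α : Type*} [DecidableEq α] (w : α → ℕ)
    (hbin : ∀ g, w g = 0 ∨ w g = 1)
    (Xi Xj : Finset α) (hdisj : Disjoint Xi Xj)
    (hEFX : ∀ g ∈ Xj, addValN w (Xj.erase g) ≤ addValN w Xi) :
    muN (addValN w) (Xi ∪ Xj) ≤ addValN w Xi := by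
  have hXj : addValN w Xj ≤ addValN w Xi + 1 := by
    rcases Xj.eq_empty_or_nonempty with h | ⟨g, hg⟩
    · simp [h, addValN]
    · have h1 : w g + addValN w (Xj.erase g) = addValN w Xj :=
        Finset.add_sum_erase _ _ hg
      have h2 := hEFX g hg
      rcases hbin g with h3 | h3 <;> omega
  have htot : addValN w (Xi ∪ Xj) = addValN w Xi + addValN w Xj :=
    Finset.sum_union hdisj
  apply Finset.sup'_le
  intro A hA
  have hAs : A ⊆ Xi ∪ Xj := Finset.mem_powerset.mp hA
  have hsplit : addValN w ((Xi ∪ Xj) \ A) + addValN w A = addValN w (Xi ∪ Xj) :=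
    Finset.sum_sdiff hAs
  omega
end

section
/- For any instance with n agents having binary-valued MMS-feasible valuations (v_i(S) ∈ {0,1} for all S ⊆ M, not necessarily monotone), there exists a complete allocation X = (X_1, ..., X_n) of M such that for every pair of agents i, j: v_i(X_i) ≥ μ_i(X_i ∪ X_j), where μ_i(S) = max over 2-partitions (A,B) of S of min(v_i(A), v_i(B)). -/
open Finset

/-!
For a 0/1 valuation, `μ_a(S) = 1` exactly when `S` is *splittable* for `a`: it splits into two
parts that `a` values `1`. MMS-feasibility says that every split of a splittable set has a part
valued `1`. So an agent who does not value `∅` values every set it finds splittable, and two agents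
who find the same set splittable can share it so that each gets a part it values.

Agents who value `∅` receive `∅`. Among the others, take an allocation minimising, in lexicographic
order, the number of unhappy agents (`v_a(X_a) = 0`), the number of goods they hold, and the number
of agents denied their PMMS. If `i` is denied its PMMS against `j`, then `X_i = ∅`, since otherwise
`i` could take `X_i ∪ X_j`. Follow a path `i → j₁ → j₂ → ⋯` in which every agent finds the next
agent's bundle splittable, and let `t` be its last agent. Give every agent on the path the bundle of
the next one, and `t` the empty bundle of `i`. If `t` finds no bundle splittable, this removes `i`
from the violators and creates none. If `t` finds a bundle on the path splittable, splitting that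
bundle between `t` and its predecessor on the path makes `i` happy. Both contradict minimality, so
the path can always be extended by a new agent, which is absurd.
-/

theorem List.IsChain.rel_formPerm {β : Type*} [DecidableEq β] {R : β → β → Prop} {l : List β}
    (hn : l.Nodup) (hc : l.IsChain R) {a : β} (ha : a ∈ l)
    (hlast : a ≠ l.getLast (List.ne_nil_of_mem ha)) : R a (l.formPerm a) := by
  obtain ⟨k, hk, rfl⟩ := List.getElem_of_mem ha
  have hk1 : k + 1 < l.length := by
    by_contra h
    exact hlast (by rw [List.getLast_eq_getElem]; congr; omega)
  rw [List.formPerm_apply_lt_getElem l hn k hk1]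
  exact hc.getElem k hk1

namespace FairDivision

variable {ι α : Type*}

section Splittable

variable [DecidableEq α]

def Splittable (p : Finset α → Prop) (S : Finset α) : Prop :=
  ∃ A ⊆ S, p A ∧ p (S \ A)

def SplitClosed (p : Finset α → Prop) : Prop :=
  ∀ ⦃S B : Finset α⦄, Splittable p S → B ⊆ S → p B ∨ p (S \ B)

variable {p q : Finset α → Prop}

theorem not_splittable_empty (h0 : ¬ p ∅) : ¬ Splittable p ∅ := by
  rintro ⟨A, hA, hpA, -⟩
  rw [subset_empty.1 hA] at hpA
  exact h0 hpA

theorem SplitClosed.of_splittable (hp : SplitClosed p) (h0 : ¬ p ∅) {S : Finset α}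
    (hS : Splittable p S) : p S := by
  simpa [h0] using hp hS (empty_subset S)

theorem SplitClosed.exists_split (hp : SplitClosed p) {S : Finset α} (hpS : Splittable p S)
    (hqS : Splittable q S) : ∃ C ⊆ S, p C ∧ q (S \ C) := by
  obtain ⟨A, hA, hqA, hqA'⟩ := hqS
  rcases hp hpS hA with h | h
  · exact ⟨A, hA, h, hqA'⟩
  · exact ⟨S \ A, sdiff_subset, h, by rwa [Finset.sdiff_sdiff_eq_self hA]⟩

end Splittable

section Allocation

variable [DecidableEq α] [Fintype ι] {M : Finset α} {X : ι → Finset α}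

structure IsAllocation (M : Finset α) (X : ι → Finset α) : Prop where
  disjoint : Pairwise fun a b => Disjoint (X a) (X b)
  biUnion_eq : univ.biUnion X = M

theorem IsAllocation.subset (hX : IsAllocation M X) (i : ι) : X i ⊆ M :=
  hX.biUnion_eq ▸ subset_biUnion_of_mem X (mem_univ i)

theorem isAllocation_update_empty [DecidableEq ι] (M : Finset α) (i : ι) :
    IsAllocation M (Function.update (fun _ => ∅) i M) := by
  refine ⟨fun a b hab => disjoint_left.2 fun x hxa hxb => ?_, ?_⟩
  · simp only [Function.update_apply] at hxa hxb
    split_ifs at hxa hxb <;> simp_all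
  · ext x
    simp only [mem_biUnion, mem_univ, true_and, Function.update_apply]
    exact ⟨fun ⟨a, ha⟩ => by split_ifs at ha <;> simp_all, fun hx => ⟨i, by simpa⟩⟩

theorem IsAllocation.comp_perm (hX : IsAllocation M X) (σ : Equiv.Perm ι) :
    IsAllocation M (fun a => X (σ a)) := by
  refine ⟨fun a b hab => hX.disjoint (σ.injective.ne hab), ?_⟩
  rw [← hX.biUnion_eq]
  ext x
  simp only [mem_biUnion, mem_univ, true_and]
  exact (σ.surjective.exists (p := fun a => x ∈ X a)).symm

theorem IsAllocation.update_update [DecidableEq ι] (hX : IsAllocation M X) {i j : ι} (hij : i ≠ j)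
    {P Q : Finset α} (hPQ : P ∪ Q = X i ∪ X j) (hPQd : Disjoint P Q) :
    IsAllocation M (Function.update (Function.update X i P) j Q) := by
  have hmem : ∀ x, x ∈ P ∨ x ∈ Q ↔ x ∈ X i ∨ x ∈ X j := fun x => by
    simp only [← mem_union, hPQ]
  have hdisj : ∀ a b x, a ≠ b → x ∈ X a → x ∉ X b := fun a b x hab =>
    @disjoint_left.1 (hX.disjoint hab) x
  have hPQ' : ∀ x, x ∈ P → x ∉ Q := fun x => @disjoint_left.1 hPQd x
  refine ⟨fun a b hab => disjoint_left.2 fun x hxa hxb => ?_, ?_⟩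
  · simp only [Function.update_apply] at hxa hxb
    grind
  · rw [← hX.biUnion_eq]
    ext x
    simp only [mem_biUnion, mem_univ, true_and, Function.update_apply]
    grind

theorem IsAllocation.extend {κ : Type*} [Fintype κ] {f : κ → ι} (hf : f.Injective)
    {Y : κ → Finset α} (hY : IsAllocation M Y) :
    IsAllocation M (Function.extend f Y fun _ => ∅) := by
  have hval : ∀ a, (∃ k, f k = a ∧ Function.extend f Y (fun _ => ∅) a = Y k) ∨
      Function.extend f Y (fun _ => ∅) a = ∅ := fun a => by
    by_cases ha : ∃ k, f k = a
    · obtain ⟨k, rfl⟩ := ha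
      exact Or.inl ⟨k, rfl, hf.extend_apply _ _ k⟩
    · exact Or.inr (Function.extend_apply' _ _ a ha)
  refine ⟨fun a b hab => ?_, ?_⟩
  · rcases hval a with ⟨k, rfl, hk⟩ | ha
    · rcases hval b with ⟨k', rfl, hk'⟩ | hb
      · rw [hk, hk']
        exact hY.disjoint (fun h => hab (congrArg f h))
      · simp [hb]
    · simp [ha]
  · rw [← hY.biUnion_eq]
    ext x
    simp only [mem_biUnion, mem_univ, true_and]
    constructor
    · rintro ⟨a, hx⟩
      rcases hval a with ⟨k, -, hk⟩ | ha
      · exact ⟨k, hk ▸ hx⟩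
      · simp [ha] at hx
    · rintro ⟨k, hx⟩
      exact ⟨f k, by rwa [hf.extend_apply]⟩

end Allocation

section Paths

variable [DecidableEq α] (p : ι → Finset α → Prop)

/-- `p a S` stands for `v_a(S) = 1`. A 0/1 valuation has `μ_a(S) = 1` exactly when `S` is
splittable for `a`, so this says that `a` is denied its PMMS against some `b`. -/
def Violates (X : ι → Finset α) (a : ι) : Prop :=
  ¬ p a (X a) ∧ ∃ b ≠ a, Splittable (p a) (X a ∪ X b)

def IsPMMS (X : ι → Finset α) : Prop :=
  ∀ a, ¬ Violates p X a

structure IsSplitPath (X : ι → Finset α) (L : List ι) : Prop where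
  nodup : L.Nodup
  isChain : L.IsChain fun a b => Splittable (p a) (X b)

variable {p}

theorem IsSplitPath.happy_formPerm [DecidableEq ι] (hp : ∀ a, SplitClosed (p a)) (h0 : ∀ a, ¬ p a ∅)
    {X : ι → Finset α} {L : List ι} (hL : IsSplitPath p X L) {a : ι} (ha : a ∈ L)
    (hlast : a ≠ L.getLast (List.ne_nil_of_mem ha)) : p a (X (L.formPerm a)) :=
  (hp a).of_splittable (h0 a) (hL.isChain.rel_formPerm hL.nodup ha hlast)

end Paths

section Unhappy

variable [Fintype ι] (p : ι → Finset α → Prop)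

open scoped Classical in
noncomputable def unhappy (X : ι → Finset α) : Finset ι :=
  univ.filter fun a => ¬ p a (X a)

open scoped Classical in
noncomputable def unhappyMass (X : ι → Finset α) : ℕ :=
  ∑ a, if p a (X a) then 0 else (X a).card

variable {p}

@[simp]
theorem mem_unhappy {X : ι → Finset α} {a : ι} : a ∈ unhappy p X ↔ ¬ p a (X a) := by
  simp [unhappy]

theorem card_unhappy_le [DecidableEq ι] {X Y : ι → Finset α} {i j : ι} (hi : ¬ p i (X i))
    (h : ∀ a, ¬ p a (Y a) → a = j ∨ a ≠ i ∧ ¬ p a (X a)) :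
    (unhappy p Y).card ≤ (unhappy p X).card :=
  calc (unhappy p Y).card
      ≤ (insert j ((unhappy p X).erase i)).card := card_le_card fun a ha => by
        simpa [and_comm] using h a (mem_unhappy.1 ha)
    _ ≤ ((unhappy p X).erase i).card + 1 := card_insert_le _ _
    _ = (unhappy p X).card := card_erase_add_one (mem_unhappy.2 hi)

theorem unhappyMass_le {X Y : ι → Finset α} (h : ∀ a, ¬ p a (Y a) → Y a = ∅ ∨ Y a = X a) :
    unhappyMass p Y ≤ unhappyMass p X :=
  sum_le_sum fun a _ => by
    split_ifs with hY hX <;> first | omega | rcases h a hY with h | h <;> simp_all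

theorem unhappyMass_lt {X Y : ι → Finset α} (h : ∀ a, ¬ p a (Y a) → Y a = ∅ ∨ Y a = X a) {i : ι}
    (hi : ¬ p i (X i)) (hi' : p i (Y i)) (hne : (X i).Nonempty) :
    unhappyMass p Y < unhappyMass p X := by
  refine sum_lt_sum (fun a _ => ?_) ⟨i, mem_univ i, by simpa [hi, hi'] using hne⟩
  split_ifs with hY hX <;> first | omega | rcases h a hY with h | h <;> simp_all

end Unhappy

section Optimal

variable [DecidableEq α] [Fintype ι] (p : ι → Finset α → Prop)

open scoped Classical in
noncomputable def violators (X : ι → Finset α) : Finset ι :=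
  univ.filter (Violates p X)

noncomputable def potential (X : ι → Finset α) : ℕ ×ₗ ℕ ×ₗ ℕ :=
  toLex ((unhappy p X).card, toLex (unhappyMass p X, (violators p X).card))

structure IsOptimal (M : Finset α) (X : ι → Finset α) : Prop where
  isAllocation : IsAllocation M X
  not_lt : ∀ Y, IsAllocation M Y → ¬ potential p Y < potential p X

theorem exists_isOptimal [DecidableEq ι] [Nonempty ι] (M : Finset α) : ∃ X, IsOptimal p M X := by
  obtain ⟨X, hX, hmin⟩ := (InvImage.wf (potential p) wellFounded_lt).has_min
    {X | IsAllocation M X} ⟨_, isAllocation_update_empty M (Classical.arbitrary ι)⟩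
  exact ⟨X, ⟨hX, hmin⟩⟩

variable {p} {M : Finset α} {X Y : ι → Finset α}

@[simp]
theorem mem_violators {a : ι} : a ∈ violators p X ↔ Violates p X a := by
  simp [violators]

theorem potential_lt_of_gain {i : ι} (hkeep : ∀ a, p a (X a) → p a (Y a)) (hi : ¬ p i (X i))
    (hi' : p i (Y i)) : potential p Y < potential p X := by
  have : unhappy p Y ⊂ unhappy p X :=
    (ssubset_iff_of_subset fun a ha => by simpa using mt (hkeep a) (mem_unhappy.1 ha)).2
      ⟨i, by simpa, by simpa⟩
  exact Prod.Lex.toLex_lt_toLex.2 (Or.inl (card_lt_card this))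

theorem potential_lt_of_mass_lt (hu : (unhappy p Y).card ≤ (unhappy p X).card)
    (hm : unhappyMass p Y < unhappyMass p X) : potential p Y < potential p X := by
  simp only [potential, Prod.Lex.toLex_lt_toLex]
  omega

theorem potential_lt_of_violators_ssubset (hu : (unhappy p Y).card ≤ (unhappy p X).card)
    (hm : unhappyMass p Y ≤ unhappyMass p X) (hv : violators p Y ⊂ violators p X) :
    potential p Y < potential p X := by
  have := card_lt_card hv
  simp only [potential, Prod.Lex.toLex_lt_toLex]
  omega

theorem IsOptimal.eq_empty_of_violates [DecidableEq ι] (hp : ∀ a, SplitClosed (p a))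
    (h0 : ∀ a, ¬ p a ∅) (hX : IsOptimal p M X) {i : ι} (hi : Violates p X i) : X i = ∅ := by
  obtain ⟨hiX, j, hji, hS⟩ := hi
  by_contra hne
  set Y := Function.update (Function.update X i (X i ∪ X j)) j ∅
  have hY : IsAllocation M Y :=
    hX.isAllocation.update_update hji.symm (by simp) (disjoint_empty_right _)
  have hYi : p i (Y i) := by simpa [Y, hji.symm] using (hp i).of_splittable (h0 i) hS
  have hYj : Y j = ∅ := by simp [Y]
  have hYo : ∀ a, a ≠ i → a ≠ j → Y a = X a := by intro a hai haj; simp [Y, hai, haj]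
  have hunh : ∀ a, ¬ p a (Y a) → a = j ∨ a ≠ i ∧ Y a = X a := fun a ha => by
    by_cases haj : a = j
    · exact Or.inl haj
    have hai : a ≠ i := by rintro rfl; exact ha hYi
    exact Or.inr ⟨hai, hYo a hai haj⟩
  refine hX.not_lt Y hY (potential_lt_of_mass_lt (card_unhappy_le (j := j) hiX fun a ha => ?_)
    (unhappyMass_lt (fun a ha => ?_) hiX hYi (nonempty_iff_ne_empty.2 hne)))
  · exact (hunh a ha).imp_right fun h : a ≠ i ∧ Y a = X a => ⟨h.1, h.2 ▸ ha⟩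
  · exact (hunh a ha).imp (fun h : a = j => h ▸ hYj) And.right

theorem IsOptimal.exists_splittable_getLast [DecidableEq ι] (hp : ∀ a, SplitClosed (p a))
    (h0 : ∀ a, ¬ p a ∅) (hX : IsOptimal p M X) {i : ι} (hi : Violates p X i) (hXi : X i = ∅)
    {l : List ι} (hL : IsSplitPath p X (i :: l)) :
    ∃ b, Splittable (p ((i :: l).getLast (List.cons_ne_nil i l))) (X b) := by
  set L := i :: l
  set t := L.getLast (List.cons_ne_nil i l)
  set σ := L.formPerm
  by_contra! hsink
  set Y := fun a => X (σ a)
  have hYt : Y t = ∅ := by simp [Y, σ, t, L, hXi]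
  have hout : ∀ a ∉ L, σ a = a := fun a ha => List.formPerm_apply_of_notMem ha
  have hoff : ∀ a, ¬ p a (Y a) → a ≠ t → a ∉ L := fun a ha hat haL =>
    ha (hL.happy_formPerm hp h0 haL hat)
  have hiL : i ∈ L := List.mem_cons_self
  refine hX.not_lt Y (hX.isAllocation.comp_perm σ) (potential_lt_of_violators_ssubset
    (card_unhappy_le (j := t) (by rw [hXi]; exact h0 i) fun a ha => ?_) ?_ ?_)
  · by_cases hat : a = t
    · exact Or.inl hat
    have haL := hoff a ha hat
    exact Or.inr ⟨fun h => haL (h ▸ hiL), by simpa [Y, hout a haL] using ha⟩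
  · refine unhappyMass_le fun a ha => ?_
    by_cases hat : a = t
    · exact Or.inl (hat ▸ hYt)
    · exact Or.inr (congrArg X (hout a (hoff a ha hat)))
  · have hnot : ∀ b, ¬ Splittable (p t) (Y t ∪ Y b) := fun b hS => by
      rw [hYt, empty_union] at hS
      exact hsink _ hS
    refine (ssubset_iff_of_subset fun a ha => ?_).2 ⟨i, mem_violators.2 hi, ?_⟩
    · obtain ⟨hYa, b, hba, hS⟩ := mem_violators.1 ha
      have hat : a ≠ t := by rintro rfl; exact hnot b hS
      have hσa := hout a (hoff a hYa hat)
      refine mem_violators.2 ⟨by simpa [Y, hσa] using hYa, σ b, ?_, by simpa [Y, hσa] using hS⟩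
      exact fun h => hba (σ.injective (h.trans hσa.symm))
    · rintro hYi
      obtain ⟨hYi, b, -, hS⟩ := mem_violators.1 hYi
      by_cases hit : i = t
      · rw [hit] at hS
        exact hnot b hS
      · exact hYi (hL.happy_formPerm hp h0 hiL hit)

theorem IsOptimal.notMem_of_splittable_getLast [DecidableEq ι] (hp : ∀ a, SplitClosed (p a))
    (h0 : ∀ a, ¬ p a ∅) (hX : IsOptimal p M X) {i : ι} (hXi : X i = ∅) {l : List ι}
    (hL : IsSplitPath p X (i :: l)) {b : ι}
    (hb : Splittable (p ((i :: l).getLast (List.cons_ne_nil i l))) (X b)) : b ∉ i :: l := by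
  set L := i :: l
  set t := L.getLast (List.cons_ne_nil i l)
  set σ := L.formPerm
  intro hbL
  have hσt : σ t = i := List.formPerm_apply_getLast i l
  have htL : t ∈ L := List.getLast_mem _
  have hout : ∀ a ∉ L, σ a = a := fun a ha => List.formPerm_apply_of_notMem ha
  have hbi : b ≠ i := by
    rintro rfl
    rw [hXi] at hb
    exact not_splittable_empty (h0 t) hb
  set u := σ.symm b
  have hσu : σ u = b := σ.apply_symm_apply b
  have huL : u ∈ L := List.mem_of_formPerm_apply_mem (hσu ▸ hbL)
  have hut : u ≠ t := by
    rintro hut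
    rw [hut, hσt] at hσu
    exact hbi hσu.symm
  have hub : Splittable (p u) (X b) := hσu ▸ hL.isChain.rel_formPerm hL.nodup huL hut
  obtain ⟨C, hC, huC, htC⟩ := (hp u).exists_split hub hb
  set Y := Function.update (Function.update (fun a => X (σ a)) u C) t (X b \ C)
  have hY : IsAllocation M Y := (hX.isAllocation.comp_perm σ).update_update hut
    (by simp [hσu, hσt, hXi, union_sdiff_of_subset hC]) disjoint_sdiff
  have hYL : ∀ a ∈ L, p a (Y a) := by
    intro a ha
    by_cases hat : a = t
    · simpa [Y, hat] using htC
    by_cases hau : a = u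
    · simpa [Y, hau, hut] using huC
    · simpa [Y, hat, hau] using hL.happy_formPerm hp h0 ha hat
  have hYout : ∀ a ∉ L, Y a = X a := fun a ha => by
    have hat : a ≠ t := fun h => ha (h ▸ htL)
    have hau : a ≠ u := fun h => ha (h ▸ huL)
    simp [Y, hat, hau, hout a ha]
  refine hX.not_lt Y hY (potential_lt_of_gain (i := i) (fun a ha => ?_) (hXi ▸ h0 i)
    (hYL i List.mem_cons_self))
  by_cases haL : a ∈ L
  · exact hYL a haL
  · exact hYout a haL ▸ ha

theorem IsOptimal.exists_isSplitPath_append [DecidableEq ι] (hp : ∀ a, SplitClosed (p a))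
    (h0 : ∀ a, ¬ p a ∅) (hX : IsOptimal p M X) {i : ι} (hi : Violates p X i) {l : List ι}
    (hL : IsSplitPath p X (i :: l)) : ∃ b, IsSplitPath p X (i :: l ++ [b]) := by
  have hXi := hX.eq_empty_of_violates hp h0 hi
  obtain ⟨b, hb⟩ := hX.exists_splittable_getLast hp h0 hi hXi hL
  have hbL := hX.notMem_of_splittable_getLast hp h0 hXi hL hb
  refine ⟨b, hL.nodup.append (List.nodup_singleton b) (by simpa using hbL),
    hL.isChain.append (List.isChain_singleton b) ?_⟩
  rw [List.getLast?_eq_some_getLast (List.cons_ne_nil i l)]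
  simpa using hb

theorem exists_isPMMS_of_forall_not_empty [DecidableEq ι] [Nonempty ι]
    (hp : ∀ a, SplitClosed (p a)) (h0 : ∀ a, ¬ p a ∅) (M : Finset α) :
    ∃ X, IsAllocation M X ∧ IsPMMS p X := by
  obtain ⟨X, hX⟩ := exists_isOptimal p M
  refine ⟨X, hX.isAllocation, fun i hi => ?_⟩
  have hlong : ∀ k : ℕ, ∃ l : List ι, k ≤ l.length ∧ IsSplitPath p X (i :: l) := by
    intro k
    induction k with
    | zero => exact ⟨[], le_rfl, List.nodup_singleton i, List.isChain_singleton i⟩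
    | succ k ih =>
      obtain ⟨l, hk, hl⟩ := ih
      obtain ⟨b, hb⟩ := hX.exists_isSplitPath_append hp h0 hi hl
      exact ⟨l ++ [b], by simpa using hk, hb⟩
  obtain ⟨l, hk, hl⟩ := hlong (Fintype.card ι)
  have := hl.nodup.length_le_card
  simp only [List.length_cons] at this
  omega

theorem exists_isPMMS_of_forall_empty [DecidableEq ι] [Nonempty ι]
    (hp : ∀ a, SplitClosed (p a)) (h1 : ∀ a, p a ∅) (M : Finset α) :
    ∃ X, IsAllocation M X ∧ IsPMMS p X := by
  have hsingle : ∀ u, (∀ b ≠ u, ¬ Splittable (p u) M) →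
      IsPMMS p (Function.update (fun _ => ∅) u M) := by
    rintro u hu a ⟨ha, b, hba, hS⟩
    by_cases hau : a = u
    · subst hau
      simp only [Function.update_self, Function.update_of_ne hba, union_empty] at hS
      exact hu b hba hS
    · simp [hau, h1 a] at ha
  by_cases hM : ∃ u, ¬ Splittable (p u) M
  · obtain ⟨u, hu⟩ := hM
    exact ⟨_, isAllocation_update_empty M u, hsingle u fun _ _ => hu⟩
  push Not at hM
  obtain ⟨u⟩ := ‹Nonempty ι›
  by_cases hw : ∃ w, w ≠ u
  · obtain ⟨w, hwu⟩ := hw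
    obtain ⟨C, hC, hwC, huC⟩ := (hp w).exists_split (hM w) (hM u)
    refine ⟨_, (isAllocation_update_empty M w).update_update hwu (P := C) (Q := M \ C)
      (by simp [hwu.symm, union_sdiff_of_subset hC]) disjoint_sdiff, fun a ha => ha.1 ?_⟩
    by_cases hau : a = u
    · simpa [hau] using huC
    by_cases haw : a = w
    · simpa [haw, hwu] using hwC
    · simpa [hau, haw] using h1 a
  · push Not at hw
    exact ⟨_, isAllocation_update_empty M u, hsingle u fun b hb => absurd (hw b) hb⟩

theorem exists_isPMMS [DecidableEq ι] [Nonempty ι] (hp : ∀ a, SplitClosed (p a))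
    (M : Finset α) : ∃ X, IsAllocation M X ∧ IsPMMS p X := by
  classical
  by_cases h1 : ∀ a, p a ∅
  · exact exists_isPMMS_of_forall_empty hp h1 M
  obtain ⟨z, hz⟩ := not_forall.1 h1
  have : Nonempty {a // ¬ p a ∅} := ⟨⟨z, hz⟩⟩
  obtain ⟨Y, hY, hYp⟩ := exists_isPMMS_of_forall_not_empty (p := fun k : {a // ¬ p a ∅} => p k)
    (fun k => hp k) (fun k => k.2) M
  set X := Function.extend Subtype.val Y fun _ => ∅
  have hXk : ∀ k : {a // ¬ p a ∅}, X k = Y k := Subtype.val_injective.extend_apply _ _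
  have hXo : ∀ a, p a ∅ → X a = ∅ := fun a ha =>
    Function.extend_apply' _ _ _ fun ⟨k, hk⟩ => k.2 (hk ▸ ha)
  refine ⟨X, hY.extend Subtype.val_injective, ?_⟩
  rintro a ⟨ha, b, hba, hS⟩
  by_cases ha0 : p a ∅
  · exact ha (hXo a ha0 ▸ ha0)
  lift a to {a // ¬ p a ∅} using ha0
  rw [hXk] at ha hS
  by_cases hb0 : p b ∅
  · rw [hXo b hb0, union_empty] at hS
    exact ha ((hp a).of_splittable a.2 hS)
  · lift b to {a // ¬ p a ∅} using hb0
    rw [hXk] at hS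
    exact hYp a ⟨ha, b, fun h => hba (congrArg _ h), hS⟩

end Optimal

section Valuation

variable [DecidableEq α]

def MMSFeasible (f : Finset α → ℕ) : Prop :=
  ∀ S X1 Y1 : Finset α, X1 ⊆ S → Y1 ⊆ S → min (f Y1) (f (S \ Y1)) ≤ max (f X1) (f (S \ X1))

variable {f : Finset α → ℕ}

theorem splitClosed_of_mmsFeasible (hbin : ∀ S, f S = 0 ∨ f S = 1)
    (hmms : MMSFeasible f) :
    SplitClosed (f · = 1) := by
  rintro S B ⟨A, hA, hA1, hA2⟩ hB
  have := hmms S B A hB hA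
  rw [hA1, hA2] at this
  rcases hbin B with h | h <;> rcases hbin (S \ B) with h' | h' <;> simp_all

theorem muN_le (hbin : ∀ S, f S = 0 ∨ f S = 1) {S T : Finset α}
    (h : f T = 1 ∨ ¬ Splittable (f · = 1) S) : muN f S ≤ f T :=
  sup'_le _ _ fun A hA => by
    rcases h with h | h
    · rcases hbin A with h' | h' <;> omega
    · have : ¬ (f A = 1 ∧ f (S \ A) = 1) := fun h' => h ⟨A, mem_powerset.1 hA, h'⟩
      rcases hbin A with h1 | h1 <;> rcases hbin (S \ A) with h2 | h2 <;> simp_all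

end Valuation

end FairDivision

open FairDivision

theorem stmt8 {α : Type*} [DecidableEq α] (n : ℕ) (hn : 1 ≤ n) (M : Finset α)
    (v : Fin n → Finset α → ℕ)
    (hbin : ∀ i S, v i S = 0 ∨ v i S = 1)
    (hmms : ∀ i, ∀ S X1 Y1 : Finset α, X1 ⊆ S → Y1 ⊆ S →
      min (v i Y1) (v i (S \ Y1)) ≤ max (v i X1) (v i (S \ X1))) :
    ∃ X : Fin n → Finset α,
      (∀ i, X i ⊆ M) ∧ (∀ i j, i ≠ j → Disjoint (X i) (X j)) ∧
      Finset.univ.biUnion X = M ∧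
      ∀ i j, i ≠ j → muN (v i) (X i ∪ X j) ≤ v i (X i) := by
  have : Nonempty (Fin n) := ⟨⟨0, hn⟩⟩
  obtain ⟨X, hX, hpmms⟩ := exists_isPMMS (p := fun i S => v i S = 1)
    (fun i => splitClosed_of_mmsFeasible (hbin i) (hmms i)) M
  refine ⟨X, hX.subset, fun i j hij => hX.disjoint hij, hX.biUnion_eq, fun i j hij => ?_⟩
  exact muN_le (hbin i) (or_iff_not_imp_left.2 fun hi hS => hpmms i ⟨hi, j, hij.symm, hS⟩)
end

section
/- For n ≥ 2, construct an instance with n agents and m = 2k + n − 2 items (k chosen with C(2k,k) ≥ 2n), consisting of n−2 'star' items and 2k 'common' items, with monotone valuations as follows: each singleton star has value k; for each agent i a distinguished balanced partition (A_i, B_i) of the common items (pairwise distinct across agents, with A_i ∉ {A_j, B_j} for i ≠ j) where v_i(A_i) = v_i(B_i) = k+1; any bundle of size ≥ 2 containing a star has value 2k; any other bundle of common items has value equal to its cardinality. Then in this instance no allocation satisfies PMMS. -/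
open Finset

/-- `X` is a partition of the item set `M` among `n` agents. -/
def IsPartitionN {α : Type*} [DecidableEq α] {n : ℕ} (M : Finset α)
    (X : Fin n → Finset α) : Prop :=
  (∀ i, X i ⊆ M) ∧ (∀ i j, i ≠ j → Disjoint (X i) (X j)) ∧ Finset.univ.biUnion X = M

lemma mu_lb {α : Type*} [DecidableEq α] (v : Finset α → ℕ) {S B : Finset α} (h : B ⊆ S) :
    min (v B) (v (S \ B)) ≤ muN v S := by
  unfold muN
  exact Finset.le_sup' (fun A => min (v A) (v (S \ A))) (Finset.mem_powerset.mpr h)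

theorem stmt13 {α : Type*} [DecidableEq α] (n k : ℕ) (hn : 2 ≤ n)
    (hchoose : 2 * n ≤ Nat.choose (2 * k) k)
    (M Stars Commons : Finset α)
    (hSC : Disjoint Stars Commons) (hM : Stars ∪ Commons = M)
    (hScard : Stars.card = n - 2) (hCcard : Commons.card = 2 * k)
    -- the distinguished balanced partitions (A_i, Commons \ A_i)
    (A : Fin n → Finset α) (hA : ∀ i, A i ⊆ Commons) (hAcard : ∀ i, (A i).card = k)
    (hAdist : ∀ i j, i ≠ j → A i ≠ A j ∧ A i ≠ Commons \ A j)
    -- the (monotone) valuations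
    (v : Fin n → Finset α → ℕ)
    (hstar : ∀ i, ∀ s ∈ Stars, v i {s} = k)
    (hspecial : ∀ i, v i (A i) = k + 1 ∧ v i (Commons \ A i) = k + 1)
    (hbig : ∀ i, ∀ X ⊆ M, 2 ≤ X.card → (X ∩ Stars).Nonempty → v i X = 2 * k)
    (hcommon : ∀ i, ∀ X ⊆ Commons, X ≠ A i → X ≠ Commons \ A i → v i X = X.card) :
    -- no allocation satisfies PMMS
    ¬ ∃ X : Fin n → Finset α, IsPartitionN M X ∧
        ∀ i j, i ≠ j → muN (v i) (X i ∪ X j) ≤ v i (X i) := by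
  classical
  rintro ⟨X, ⟨hXM, hXdisj, hXunion⟩, hPMMS⟩
  -- k ≥ 2
  have hk2 : 2 ≤ k := by
    by_contra h
    interval_cases k <;> simp [Nat.choose] at hchoose <;> omega
  have hkC : ∀ i, (Commons \ A i).card = k := by
    intro i
    rw [card_sdiff_of_subset (hA i), hCcard, hAcard]; omega
  -- value of a common bundle is at least its cardinality
  have vge : ∀ i, ∀ Y ⊆ Commons, Y.card ≤ v i Y := by
    intro i Y hY
    by_cases h1 : Y = A i
    · rw [h1, (hspecial i).1, hAcard]; omega
    by_cases h2 : Y = Commons \ A i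
    · rw [h2, (hspecial i).2, hkC]; omega
    · rw [hcommon i Y hY h1 h2]
  have hne : Nonempty α := by
    have : 0 < Commons.card := by omega
    exact ⟨(Finset.card_pos.mp this).choose⟩
  -- starless agents hold only commons
  have starless : ∀ w, X w ∩ Stars = ∅ → X w ⊆ Commons := by
    intro w hw x hx
    have hxM : x ∈ M := hXM w hx
    rw [← hM, mem_union] at hxM
    rcases hxM with h | h
    · exact absurd (mem_inter.mpr ⟨hx, h⟩) (by simp [hw])
    · exact h
  -- the set of star-holders
  set T : Finset (Fin n) := Finset.univ.filter (fun i => (X i ∩ Stars).Nonempty) with hT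
  set f : Fin n → α := fun i =>
    if h : (X i ∩ Stars).Nonempty then h.choose else Classical.arbitrary α with hfdef
  have hf : ∀ i, (X i ∩ Stars).Nonempty → f i ∈ X i ∩ Stars := by
    intro i h
    simp only [hfdef, dif_pos h]
    exact h.choose_spec
  have hfinj : Set.InjOn f ↑T := by
    intro i hi j hj hij
    by_contra hne'
    have hi' : (X i ∩ Stars).Nonempty := (mem_filter.mp hi).2
    have hj' : (X j ∩ Stars).Nonempty := (mem_filter.mp hj).2
    have h1 : f i ∈ X i := (mem_inter.mp (hf i hi')).1
    have h2 : f j ∈ X j := (mem_inter.mp (hf j hj')).1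
    rw [hij] at h1
    exact (Finset.disjoint_left.mp (hXdisj i j hne')) (hij ▸ (mem_inter.mp (hf i hi')).1) h2
  have hTcard : T.card ≤ n - 2 := by
    have := Finset.card_le_card_of_injOn f
      (fun i hi => (mem_inter.mp (hf i (mem_filter.mp hi).2)).2) hfinj
    rwa [hScard] at this
  -- two starless agents p ≠ q
  have hTc : 2 ≤ (Finset.univ \ T).card := by
    rw [card_sdiff_of_subset (subset_univ _), card_univ, Fintype.card_fin]
    omega
  obtain ⟨p, hp', q, hq', hpq⟩ := Finset.one_lt_card.mp (by omega : 1 < (Finset.univ \ T).card)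
  have hp : X p ∩ Stars = ∅ := by
    have := (mem_sdiff.mp hp').2
    simpa [hT, Finset.not_nonempty_iff_eq_empty] using this
  have hq : X q ∩ Stars = ∅ := by
    have := (mem_sdiff.mp hq').2
    simpa [hT, Finset.not_nonempty_iff_eq_empty] using this
  have hpC : X p ⊆ Commons := starless p hp
  have hqC : X q ⊆ Commons := starless q hq
  by_cases hcase : ∃ i, (X i ∩ Stars).Nonempty ∧ 2 ≤ (X i).card
  · -- Case 1: some star-holder has at least 2 items
    obtain ⟨i, hi, hi2⟩ := hcase
    -- any starless agent must hold at least k items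
    have hb : ∀ w, X w ∩ Stars = ∅ → k ≤ (X w).card := by
      intro w hw
      have hwi : w ≠ i := by
        rintro rfl
        rw [hw] at hi
        exact absurd hi (by simp)
      obtain ⟨s, hs⟩ := hi
      have hsX : s ∈ X i := (mem_inter.mp hs).1
      have hsS : s ∈ Stars := (mem_inter.mp hs).2
      have hsU : s ∈ X w ∪ X i := mem_union_right _ hsX
      have hUcard : (X w ∪ X i).card = (X w).card + (X i).card :=
        card_union_of_disjoint (hXdisj w i hwi)
      have hRcard : ((X w ∪ X i) \ {s}).card = (X w).card + (X i).card - 1 := by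
        rw [card_sdiff_of_subset (Finset.singleton_subset_iff.mpr hsU), hUcard, card_singleton]
      have hRM : (X w ∪ X i) \ {s} ⊆ M :=
        (sdiff_subset).trans (union_subset (hXM w) (hXM i))
      have hvR : min k ((X w).card + 1) ≤ v w ((X w ∪ X i) \ {s}) := by
        set R := (X w ∪ X i) \ {s} with hRdef
        by_cases hRS : (R ∩ Stars).Nonempty
        · by_cases h2 : 2 ≤ R.card
          · rw [hbig w R hRM h2 hRS]; omega
          · obtain ⟨t, ht⟩ := hRS
            have htR : t ∈ R := (mem_inter.mp ht).1
            have : R = {t} := by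
              apply Finset.eq_singleton_iff_unique_mem.mpr
              exact ⟨htR, fun x hx => Finset.card_le_one.mp (by omega) x hx t htR⟩
            rw [this, hstar w t (mem_inter.mp ht).2]
            omega
        · have hRC : R ⊆ Commons := by
            intro x hx
            have hxM : x ∈ M := hRM hx
            rw [← hM, mem_union] at hxM
            rcases hxM with h | h
            · exact absurd ⟨x, mem_inter.mpr ⟨hx, h⟩⟩ hRS
            · exact h
          have h1 := vge w R hRC
          have h2 : (X w).card + 1 ≤ R.card := by rw [hRdef, hRcard]; omega
          omega
      have hmu : min k ((X w).card + 1) ≤ muN (v w) (X w ∪ X i) := by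
        refine le_trans (le_min ?_ ?_) (mu_lb (v w) (Finset.singleton_subset_iff.mpr hsU))
        · rw [hstar w s hsS]; omega
        · exact hvR
      have hP := hPMMS w i hwi
      have hXwC : X w ⊆ Commons := starless w hw
      by_cases h1 : X w = A w
      · rw [h1, hAcard]
      by_cases h2 : X w = Commons \ A w
      · rw [h2, hkC]
      · rw [hcommon w (X w) hXwC h1 h2] at hP
        omega
    have hap : k ≤ (X p).card := hb p hp
    have haq : k ≤ (X q).card := hb q hq
    have hUC : X p ∪ X q ⊆ Commons := union_subset hpC hqC
    have hUcard : (X p ∪ X q).card = (X p).card + (X q).card :=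
      card_union_of_disjoint (hXdisj p q hpq)
    have hab : (X p).card + (X q).card ≤ 2 * k := by
      have := card_le_card hUC
      omega
    have hCeq : X p ∪ X q = Commons := by
      apply Finset.eq_of_subset_of_card_le hUC
      omega
    -- X i consists only of stars
    have hXiS : X i ⊆ Stars := by
      intro x hx
      have hxM : x ∈ M := hXM i hx
      rw [← hM, mem_union] at hxM
      rcases hxM with h | h
      · exact h
      · rw [← hCeq, mem_union] at h
        rcases h with h | h
        · exact absurd hx (Finset.disjoint_left.mp (hXdisj p i (by rintro rfl; simp [hp] at hi)) h)
        · exact absurd hx (Finset.disjoint_left.mp (hXdisj q i (by rintro rfl; simp [hq] at hi)) h)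
    -- there is an agent r with no star, outside {p, q}
    have hiT : i ∈ T := mem_filter.mpr ⟨mem_univ i, hi⟩
    have hTe : (T.erase i).card ≤ n - 4 := by
      have hmaps : ∀ j ∈ T.erase i, f j ∈ Stars \ X i := by
        intro j hj
        have hj' : (X j ∩ Stars).Nonempty := (mem_filter.mp (mem_of_mem_erase hj)).2
        refine mem_sdiff.mpr ⟨(mem_inter.mp (hf j hj')).2, fun hc => ?_⟩
        exact Finset.disjoint_left.mp (hXdisj j i (ne_of_mem_erase hj))
          (mem_inter.mp (hf j hj')).1 hc
      have hinj : Set.InjOn f ↑(T.erase i) :=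
        hfinj.mono (by exact_mod_cast Finset.erase_subset i T)
      have := Finset.card_le_card_of_injOn f hmaps hinj
      have hsd : (Stars \ X i).card = Stars.card - (X i).card := card_sdiff_of_subset hXiS
      have hXile : (X i).card ≤ Stars.card := card_le_card hXiS
      omega
    have hTcard3 : T.card ≤ n - 3 := by
      have := Finset.card_erase_of_mem hiT
      have h1 : 1 ≤ T.card := Finset.card_pos.mpr ⟨i, hiT⟩
      have h4 : 2 ≤ Stars.card := by
        rw [hScard]
        have := card_le_card hXiS
        omega
      rw [hScard] at h4
      omega
    have hn4 : 4 ≤ n := by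
      have h4 : 2 ≤ Stars.card := le_trans hi2 (card_le_card hXiS)
      rw [hScard] at h4
      omega
    obtain ⟨r, hr⟩ : (Finset.univ \ (T ∪ {p, q})).Nonempty := by
      apply Finset.card_pos.mp
      rw [card_sdiff_of_subset (subset_univ _), card_univ, Fintype.card_fin]
      have h1 : (T ∪ {p, q}).card ≤ T.card + 2 := by
        refine le_trans (card_union_le _ _) ?_
        have h5 : ({p, q} : Finset (Fin n)).card ≤ 2 := by
          refine le_trans (card_insert_le _ _) ?_
          simp
        omega
      omega
    rw [mem_sdiff, mem_union, mem_insert, mem_singleton] at hr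
    push_neg at hr
    obtain ⟨-, hrT, hrp, hrq⟩ := hr
    have hrS : X r ∩ Stars = ∅ := by
      rw [hT, mem_filter, not_and] at hrT
      simpa [Finset.not_nonempty_iff_eq_empty] using hrT (mem_univ r)
    have hrempty : X r = ∅ := by
      rw [Finset.eq_empty_iff_forall_notMem]
      intro x hx
      have : x ∈ Commons := starless r hrS hx
      rw [← hCeq, mem_union] at this
      rcases this with h | h
      · exact Finset.disjoint_left.mp (hXdisj r p hrp) hx h
      · exact Finset.disjoint_left.mp (hXdisj r q hrq) hx h
    have hvr : v r (X r) = 0 := by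
      rw [hrempty]
      rw [hcommon r ∅ (empty_subset _) ?_ ?_]
      · simp
      · intro h
        have := hAcard r
        rw [← h] at this
        simp at this
        omega
      · intro h
        have := hkC r
        rw [← h] at this
        simp at this
        omega
    obtain ⟨x, hx⟩ : (X p).Nonempty := Finset.card_pos.mp (by omega)
    have hxC : x ∈ Commons := hpC hx
    have hv1 : v r {x} = 1 := by
      rw [hcommon r {x} (Finset.singleton_subset_iff.mpr hxC) ?_ ?_]
      · simp
      · intro h
        have := hAcard r
        rw [← h] at this
        simp at this
        omega
      · intro h
        have := hkC r
        rw [← h] at this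
        simp at this
        omega
    have hv2 : 1 ≤ v r (X p \ {x}) := by
      have h1 := vge r (X p \ {x}) ((sdiff_subset).trans hpC)
      have h2 : (X p \ {x}).card = (X p).card - 1 := by
        rw [card_sdiff_of_subset (Finset.singleton_subset_iff.mpr hx), card_singleton]
      omega
    have hmu : 1 ≤ muN (v r) (X r ∪ X p) := by
      rw [hrempty, empty_union]
      refine le_trans (le_min ?_ ?_) (mu_lb (v r) (Finset.singleton_subset_iff.mpr hx))
      · omega
      · exact hv2
    have := hPMMS r p hrp
    omega
  · -- Case 2: every star-holder's bundle is a singleton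
    push_neg at hcase
    have hsing : ∀ j, ∀ s ∈ X j, s ∈ Stars → X j = {s} := by
      intro j s hsX hsS
      have h1 : (X j).card < 2 := hcase j ⟨s, mem_inter.mpr ⟨hsX, hsS⟩⟩
      apply Finset.eq_singleton_iff_unique_mem.mpr
      exact ⟨hsX, fun x hx => Finset.card_le_one.mp (by omega) x hx s hsX⟩
    -- T has exactly n - 2 elements, so univ \ T = {p, q}
    set g : α → Fin n := fun s => if h : ∃ j, s ∈ X j then h.choose else p with hgdef
    have hg : ∀ s ∈ Stars, s ∈ X (g s) := by
      intro s hs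
      have hsM : s ∈ M := by rw [← hM]; exact mem_union_left _ hs
      rw [← hXunion, mem_biUnion] at hsM
      obtain ⟨j, -, hj⟩ := hsM
      have hex : ∃ j, s ∈ X j := ⟨j, hj⟩
      simp only [hgdef, dif_pos hex]
      exact hex.choose_spec
    have hTcard2 : n - 2 ≤ T.card := by
      rw [← hScard]
      apply Finset.card_le_card_of_injOn g
      · intro s hs
        exact mem_filter.mpr ⟨mem_univ _, ⟨s, mem_inter.mpr ⟨hg s hs, hs⟩⟩⟩
      · intro s hs s' hs' hss
        have h1 := hg s hs
        have h2 := hg s' hs'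
        rw [hss] at h1
        have := hsing (g s') s' h2 hs'
        rw [this, mem_singleton] at h1
        exact h1
    have hTceq : Finset.univ \ T = {p, q} := by
      symm
      apply Finset.eq_of_subset_of_card_le
      · intro x hx
        rw [mem_insert, mem_singleton] at hx
        rcases hx with rfl | rfl
        · exact hp'
        · exact hq'
      · rw [card_sdiff_of_subset (subset_univ _), card_univ, Fintype.card_fin,
          card_insert_of_notMem (by simpa using hpq), card_singleton]
        omega
    have hCeq : X p ∪ X q = Commons := by
      apply Finset.Subset.antisymm (union_subset hpC hqC)
      intro c hc
      have hcM : c ∈ M := by rw [← hM]; exact mem_union_right _ hc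
      rw [← hXunion, mem_biUnion] at hcM
      obtain ⟨j, -, hj⟩ := hcM
      by_cases hjT : j ∈ T
      · obtain ⟨s, hs⟩ := (mem_filter.mp hjT).2
        have := hsing j s (mem_inter.mp hs).1 (mem_inter.mp hs).2
        rw [this, mem_singleton] at hj
        subst hj
        exact absurd hc (Finset.disjoint_left.mp hSC (mem_inter.mp hs).2)
      · have : j ∈ Finset.univ \ T := mem_sdiff.mpr ⟨mem_univ _, hjT⟩
        rw [hTceq, mem_insert, mem_singleton] at this
        rcases this with rfl | rfl
        · exact mem_union_left _ hj
        · exact mem_union_right _ hj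
    have hUcard : (X p).card + (X q).card = 2 * k := by
      rw [← hCcard, ← hCeq, card_union_of_disjoint (hXdisj p q hpq)]
    have hmup : k + 1 ≤ v p (X p) := by
      refine le_trans ?_ (hPMMS p q hpq)
      rw [hCeq]
      refine le_trans (le_min ?_ ?_) (mu_lb (v p) (hA p))
      · rw [(hspecial p).1]
      · rw [(hspecial p).2]
    have hmuq : k + 1 ≤ v q (X q) := by
      refine le_trans ?_ (hPMMS q p hpq.symm)
      rw [union_comm, hCeq]
      refine le_trans (le_min ?_ ?_) (mu_lb (v q) (hA q))
      · rw [(hspecial q).1]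
      · rw [(hspecial q).2]
    have hps : X p = A p ∨ X p = Commons \ A p := by
      by_contra h
      push_neg at h
      rw [hcommon p (X p) hpC h.1 h.2] at hmup
      have hq1 : X q ≠ A q := by
        intro h'
        have := hAcard q
        rw [← h'] at this
        omega
      have hq2 : X q ≠ Commons \ A q := by
        intro h'
        have := hkC q
        rw [← h'] at this
        omega
      rw [hcommon q (X q) hqC hq1 hq2] at hmuq
      omega
    have hqs : X q = A q ∨ X q = Commons \ A q := by
      by_contra h
      push_neg at h
      rw [hcommon q (X q) hqC h.1 h.2] at hmuq
      have hp1 : X p ≠ A p := by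
        intro h'
        have := hAcard p
        rw [← h'] at this
        omega
      have hp2 : X p ≠ Commons \ A p := by
        intro h'
        have := hkC p
        rw [← h'] at this
        omega
      rw [hcommon p (X p) hpC hp1 hp2] at hmup
      omega
    have hXq : X q = Commons \ X p := by
      rw [← hCeq, Finset.union_sdiff_cancel_left (hXdisj p q hpq)]
    have hdd : ∀ B : Finset α, B ⊆ Commons → Commons \ (Commons \ B) = B := by
      intro B hB
      rw [Finset.sdiff_sdiff_self_left, Finset.inter_eq_right.mpr hB]
    rcases hps with h1 | h1 <;> rcases hqs with h2 | h2
    · rw [h1] at hXq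
      rw [h2] at hXq
      exact (hAdist q p hpq.symm).2 hXq
    · rw [h1] at hXq
      rw [h2] at hXq
      have : A q = A p := by
        have := congrArg (fun S => Commons \ S) hXq
        simpa [hdd _ (hA q), hdd _ (hA p)] using this
      exact (hAdist q p hpq.symm).1 this
    · rw [h1] at hXq
      rw [h2, hdd _ (hA p)] at hXq
      exact (hAdist q p hpq.symm).1 (hXq.symm ▸ rfl)
    · rw [h1] at hXq
      rw [h2, hdd _ (hA p)] at hXq
      exact (hAdist p q hpq).2 (by rw [← hXq])
end
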